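/- Let n, d, r be positive integers, F ∈ ℝ^{n×d}, λ > 0, X_* ∈ ℝ^{d×r}, and ε ∈ ℝⁿ; set y := |F X_*| + ε. Let U_* ∈ ℝ^{n×r} have unit-norm rows with F X_* = diag(|F X_*|) U_*, and define X_λ := (nλ I_d + Fᵀ F)^{-1} Fᵀ diag(y) U_*. Then: (1/n)‖F(X_λ − X_*)‖² + λ‖X_λ − X_*‖² ≤ (√λ · ‖X_*‖ + ‖ε‖/√n)². -/

import Mathlib

open Matrix Filter Finset
open scoped Classical

set_option maxHeartbeats 800000

noncomputable section

/-- Frobenius inner product `⟨A, B⟩ = tr(Bᵀ A)` of real square matrices. -/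
def mip {d : ℕ} (A B : Matrix (Fin d) (Fin d) ℝ) : ℝ := (Bᵀ * A).trace

/-- Squared Frobenius norm of a real matrix. -/
def frobSq {m p : ℕ} (X : Matrix (Fin m) (Fin p) ℝ) : ℝ := ∑ i, ∑ j, (X i j) ^ 2

/-- Squared Euclidean norm of a real vector. -/
def vnormSq {n : ℕ} (v : Fin n → ℝ) : ℝ := ∑ i, (v i) ^ 2

/-- Euclidean norm of a real vector. -/
def vnorm {n : ℕ} (v : Fin n → ℝ) : ℝ := Real.sqrt (vnormSq v)

/-- Euclidean inner product of real vectors. -/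
def vip {n : ℕ} (u v : Fin n → ℝ) : ℝ := ∑ i, u i * v i

/-- `ddiag A` keeps the diagonal of `A`, setting off-diagonal entries to zero. -/
def ddiag {n : ℕ} (A : Matrix (Fin n) (Fin n) ℝ) : Matrix (Fin n) (Fin n) ℝ :=
  Matrix.diagonal fun i => A i i

/-- `rowNorms M` is the vector of Euclidean norms of the rows of `M` (`|M|`). -/
def rowNorms {n k : ℕ} (M : Matrix (Fin n) (Fin k) ℝ) : Fin n → ℝ :=
  fun i => Real.sqrt (∑ j, (M i j) ^ 2)

/- Auxiliary material -/

def fip {m p : ℕ} (X Y : Matrix (Fin m) (Fin p) ℝ) : ℝ := ∑ i, ∑ j, X i j * Y i j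

lemma frobSq_nonneg {m p : ℕ} (X : Matrix (Fin m) (Fin p) ℝ) : 0 ≤ frobSq X := by
  apply Finset.sum_nonneg; intro i _; apply Finset.sum_nonneg; intro j _; positivity

lemma fip_self {m p : ℕ} (X : Matrix (Fin m) (Fin p) ℝ) : fip X X = frobSq X := by
  simp [fip, frobSq, sq]

lemma fip_eq_trace {m p : ℕ} (X Y : Matrix (Fin m) (Fin p) ℝ) : fip X Y = (Yᵀ * X).trace := by
  rw [fip, Finset.sum_comm, Matrix.trace]
  simp [Matrix.diag, Matrix.mul_apply, mul_comm]

lemma fip_adjoint {n d r : ℕ} (M : Matrix (Fin n) (Fin d) ℝ) (X : Matrix (Fin d) (Fin r) ℝ)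
    (Y : Matrix (Fin n) (Fin r) ℝ) : fip (M * X) Y = fip X (Mᵀ * Y) := by
  rw [fip_eq_trace, fip_eq_trace, Matrix.transpose_mul, Matrix.transpose_transpose,
    Matrix.mul_assoc]

lemma fip_sub_left {m p : ℕ} (X Y Z : Matrix (Fin m) (Fin p) ℝ) :
    fip (X - Y) Z = fip X Z - fip Y Z := by
  simp [fip, Matrix.sub_apply, sub_mul, Finset.sum_sub_distrib]

lemma fip_add_left {m p : ℕ} (X Y Z : Matrix (Fin m) (Fin p) ℝ) :
    fip (X + Y) Z = fip X Z + fip Y Z := by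
  simp [fip, Matrix.add_apply, add_mul, Finset.sum_add_distrib]

lemma fip_smul_left {m p : ℕ} (c : ℝ) (X Y : Matrix (Fin m) (Fin p) ℝ) :
    fip (c • X) Y = c * fip X Y := by
  simp [fip, Finset.mul_sum, mul_assoc]

lemma fip_neg_left {m p : ℕ} (X Y : Matrix (Fin m) (Fin p) ℝ) :
    fip (-X) Y = -fip X Y := by
  simp [fip, Finset.sum_neg_distrib]

lemma frobSq_neg {m p : ℕ} (X : Matrix (Fin m) (Fin p) ℝ) : frobSq (-X) = frobSq X := by
  simp [frobSq]

lemma fip_cs {m p : ℕ} (X Y : Matrix (Fin m) (Fin p) ℝ) :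
    fip X Y ≤ Real.sqrt (frobSq X) * Real.sqrt (frobSq Y) := by
  have h1 : fip X Y = ∑ ij : Fin m × Fin p, X ij.1 ij.2 * Y ij.1 ij.2 := by
    rw [fip]; exact (Fintype.sum_prod_type (fun ij : Fin m × Fin p => X ij.1 ij.2 * Y ij.1 ij.2)).symm
  have h2 : frobSq X = ∑ ij : Fin m × Fin p, (X ij.1 ij.2) ^ 2 := by
    rw [frobSq]; exact (Fintype.sum_prod_type (fun ij : Fin m × Fin p => (X ij.1 ij.2) ^ 2)).symm
  have h3 : frobSq Y = ∑ ij : Fin m × Fin p, (Y ij.1 ij.2) ^ 2 := by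
    rw [frobSq]; exact (Fintype.sum_prod_type (fun ij : Fin m × Fin p => (Y ij.1 ij.2) ^ 2)).symm
  rw [h1, h2, h3]
  exact Real.sum_mul_le_sqrt_mul_sqrt _ _ _

/-- Ridge-regression error bound for the oracle solution `X_λ = R_λ U⋆`:
`(1/n)‖F(X_λ − X⋆)‖² + λ‖X_λ − X⋆‖² ≤ (√λ‖X⋆‖ + ‖ε‖/√n)²`. -/
theorem stmt18 {n d r : ℕ} (hn : 0 < n) (hd : 0 < d) (hr : 0 < r)
    (F : Matrix (Fin n) (Fin d) ℝ) (lam : ℝ) (hlam : 0 < lam)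
    (Xstar : Matrix (Fin d) (Fin r) ℝ) (ε : Fin n → ℝ)
    (y : Fin n → ℝ) (hy_def : ∀ i, y i = rowNorms (F * Xstar) i + ε i)
    (Ustar : Matrix (Fin n) (Fin r) ℝ)
    (hUstar : ∀ i, ∑ j, (Ustar i j) ^ 2 = 1)
    (hUstar_def : F * Xstar = Matrix.diagonal (rowNorms (F * Xstar)) * Ustar)
    (Xlam : Matrix (Fin d) (Fin r) ℝ)
    (hXlam : Xlam = (((n:ℝ) * lam) • (1 : Matrix (Fin d) (Fin d) ℝ) + Fᵀ * F)⁻¹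
        * Fᵀ * Matrix.diagonal y * Ustar) :
    (1 / (n:ℝ)) * frobSq (F * (Xlam - Xstar)) + lam * frobSq (Xlam - Xstar) ≤
      (Real.sqrt lam * Real.sqrt (frobSq Xstar) + vnorm ε / Real.sqrt n) ^ 2 := by
  have hn0 : (0:ℝ) < (n:ℝ) := by exact_mod_cast hn
  have hc0 : (0:ℝ) < (n:ℝ) * lam := mul_pos hn0 hlam
  set c : ℝ := (n:ℝ) * lam with hc
  set A : Matrix (Fin d) (Fin d) ℝ := c • (1 : Matrix (Fin d) (Fin d) ℝ) + Fᵀ * F with hA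
  -- A is positive definite, hence invertible
  have hApos : A.PosDef := by
    have h1 : (c • (1 : Matrix (Fin d) (Fin d) ℝ)).PosDef := by
      rw [Matrix.smul_one_eq_diagonal]
      exact Matrix.posDef_diagonal_iff.2 fun _ => hc0
    have h2 : (Fᵀ * F).PosSemidef := by
      have := Matrix.posSemidef_conjTranspose_mul_self F
      rwa [Matrix.conjTranspose_eq_transpose_of_trivial] at this
    exact h1.add_posSemidef h2
  have hdet : IsUnit A.det := (Matrix.isUnit_iff_isUnit_det A).1 hApos.isUnit
  have hAinv : A * A⁻¹ = 1 := Matrix.mul_nonsing_inv _ hdet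
  set E : Matrix (Fin n) (Fin r) ℝ := Matrix.diagonal ε * Ustar with hE
  set D : Matrix (Fin d) (Fin r) ℝ := Xlam - Xstar with hD
  -- key matrix identity : A * Xlam = Fᵀ*(F*Xstar) + Fᵀ*E
  have hdy : Matrix.diagonal y = Matrix.diagonal (rowNorms (F * Xstar)) + Matrix.diagonal ε := by
    rw [Matrix.diagonal_add]; exact congrArg Matrix.diagonal (funext hy_def)
  have hAXlam : A * Xlam = Fᵀ * (F * Xstar) + Fᵀ * E := by
    rw [hXlam]
    calc A * (A⁻¹ * Fᵀ * Matrix.diagonal y * Ustar)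
        = (A * A⁻¹) * (Fᵀ * (Matrix.diagonal y * Ustar)) := by
          rw [Matrix.mul_assoc, Matrix.mul_assoc, Matrix.mul_assoc]
      _ = Fᵀ * (Matrix.diagonal y * Ustar) := by rw [hAinv, Matrix.one_mul]
      _ = Fᵀ * (F * Xstar) + Fᵀ * E := by
          rw [hdy, Matrix.add_mul, ← hUstar_def, hE, Matrix.mul_add]
  have hAXstar : A * Xstar = c • Xstar + Fᵀ * (F * Xstar) := by
    rw [hA, Matrix.add_mul, Matrix.smul_mul, Matrix.one_mul, Matrix.mul_assoc]
  have hAD1 : A * D = Fᵀ * E - c • Xstar := by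
    rw [hD, Matrix.mul_sub, hAXlam, hAXstar]; abel
  have hAD2 : A * D = c • D + Fᵀ * (F * D) := by
    rw [hA, Matrix.add_mul, Matrix.smul_mul, Matrix.one_mul, Matrix.mul_assoc]
  -- energy identity
  have hkey : frobSq (F * D) + c * frobSq D = fip E (F * D) - c * fip Xstar D := by
    have h1 : fip (A * D) D = frobSq (F * D) + c * frobSq D := by
      rw [hAD2, fip_add_left, fip_smul_left, fip_adjoint Fᵀ (F * D) D,
        Matrix.transpose_transpose, fip_self, fip_self]
      ring
    have h2 : fip (A * D) D = fip E (F * D) - c * fip Xstar D := by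
      rw [hAD1, fip_sub_left, fip_smul_left, fip_adjoint Fᵀ E D, Matrix.transpose_transpose]
    rw [← h1, h2]
  -- Frobenius norm of E equals vector norm of ε
  have hE2 : frobSq E = vnormSq ε := by
    rw [frobSq, hE, vnormSq]
    refine Finset.sum_congr rfl fun i _ => ?_
    have : ∀ j, (Matrix.diagonal ε * Ustar) i j = ε i * Ustar i j := fun j => by
      rw [Matrix.diagonal_mul]
    simp_rw [this, mul_pow, ← Finset.mul_sum, hUstar i, mul_one]
  -- abbreviations
  set a : ℝ := Real.sqrt (frobSq (F * D)) with ha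
  set b : ℝ := Real.sqrt (frobSq D) with hb
  set x : ℝ := Real.sqrt (frobSq Xstar) with hx
  set e : ℝ := vnorm ε with he
  have ha2 : a ^ 2 = frobSq (F * D) := Real.sq_sqrt (frobSq_nonneg _)
  have hb2 : b ^ 2 = frobSq D := Real.sq_sqrt (frobSq_nonneg _)
  have ha0 : 0 ≤ a := Real.sqrt_nonneg _
  have hb0 : 0 ≤ b := Real.sqrt_nonneg _
  have hx0 : 0 ≤ x := Real.sqrt_nonneg _
  have he0 : 0 ≤ e := Real.sqrt_nonneg _
  -- Cauchy-Schwarz bounds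
  have cs1 : fip E (F * D) ≤ e * a := by
    have := fip_cs E (F * D)
    rwa [hE2] at this
  have cs2 : -fip Xstar D ≤ x * b := by
    have := fip_cs (-Xstar) D
    rwa [fip_neg_left, frobSq_neg] at this
  have key2 : a ^ 2 + c * b ^ 2 ≤ e * a + c * (x * b) := by
    rw [ha2, hb2, hkey]
    have h3 : -(c * fip Xstar D) ≤ c * (x * b) := by
      have := mul_le_mul_of_nonneg_left cs2 hc0.le
      linarith [this]
    linarith
  -- AM-GM step
  set t : ℝ := Real.sqrt c with ht
  have ht2 : t ^ 2 = c := Real.sq_sqrt hc0.le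
  have ht0 : 0 ≤ t := Real.sqrt_nonneg _
  have maint : a ^ 2 + c * b ^ 2 ≤ (t * x + e) ^ 2 := by
    have hh1 : e * a ≤ (a ^ 2 + e ^ 2) / 2 := by nlinarith [sq_nonneg (a - e)]
    have hh2 : c * (x * b) ≤ (c * b ^ 2 + c * x ^ 2) / 2 := by
      nlinarith [sq_nonneg (t * b - t * x), ht2]
    have hh3 : 0 ≤ e * (t * x) := mul_nonneg he0 (mul_nonneg ht0 hx0)
    have hexp2 : (t * x + e) ^ 2 = c * x ^ 2 + 2 * (e * (t * x)) + e ^ 2 := by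
      rw [← ht2]; ring
    linarith [key2, hh1, hh2, hh3]
  -- put things together
  have hsn : Real.sqrt ((n:ℝ)) * Real.sqrt lam = t := by
    rw [ht, hc, ← Real.sqrt_mul hn0.le]
  have hsn0 : 0 < Real.sqrt (n:ℝ) := Real.sqrt_pos.2 hn0
  have hsn2 : Real.sqrt (n:ℝ) ^ 2 = (n:ℝ) := Real.sq_sqrt hn0.le
  have h1 : Real.sqrt lam * x + e / Real.sqrt n = (t * x + e) / Real.sqrt n := by
    rw [← hsn]; field_simp
  rw [← ha2, ← hb2, h1, div_pow, hsn2, le_div_iff₀ hn0]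
  have hexp : ((1 / (n:ℝ)) * a ^ 2 + lam * b ^ 2) * (n:ℝ) = a ^ 2 + c * b ^ 2 := by
    rw [hc]; field_simp
  rw [hexp]
  exact maint
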